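/- arXiv:2507.15525 — 5 statements merged into one kernel-verified Lean document; each statement's English description precedes it below -/
import Mathlib

section
/- Let k be a field of characteristic zero and let d be the k-derivation of k[x,y] given by d = y^{m1} ∂_x + (1 + y^{m2} x) ∂_y, where m1, m2 are positive integers such that m2 does not divide m1. If f ∈ k[x,y] satisfies d(f) = g(x) for some g ∈ k[x], then f ∈ k and g = 0. -/
/-!
Write `f = ∑ c a e x^a y^e`. Comparing coefficients of `x^a y^e` in
`y^{m1} f_x + f_y + y^{m2} x f_y = g(x)` gives a three-term recurrence for the `c a e`.
Let `A ≥ 1` be the largest `x`-degree of `f`. The recurrence forces the rows `A` and `A - 1` to be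
constant in `y`, and then the coefficient of `x^{A-1} y^{m1}` reads
`A c A 0 + (m1 - m2 + 1) c (A-2) (m1 - m2 + 1) = 0`.
A nonzero coefficient at `y`-exponent `e + 1` with `0 < e < m1` forces `m2 ≤ e` and a nonzero
coefficient at `y`-exponent `e - m2 + 1` one row lower. Starting from `e = m1 - m2`, every exponent
met is `≡ m1 (mod m2)`, hence nonzero since `m2 ∤ m1`, so this descent would never stop. Hence
`c A 0 = 0`, contradicting the choice of `A`; so `f ∈ k[y]`, and then `f_y = g(x)` forces `f`
constant and `g = 0`.
-/

open MvPolynomial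

theorem Derivation.eq_sum_smul_pderiv {R σ : Type*} [CommSemiring R] [Fintype σ]
    (D : Derivation R (MvPolynomial σ R) (MvPolynomial σ R)) :
    D = ∑ i, D (X i) • pderiv i := by
  classical
  refine derivation_ext fun j => ?_
  rw [← Derivation.coeFnAddMonoidHom_apply (∑ i, _), map_sum, Finset.sum_apply]
  simp [Derivation.coeFnAddMonoidHom_apply, pderiv_X, Pi.single_apply]

theorem Finsupp.ext_fin_two {M : Type*} [Zero M] {m n : Fin 2 →₀ M} (h0 : m 0 = n 0)
    (h1 : m 1 = n 1) : m = n := by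
  ext j
  fin_cases j
  exacts [h0, h1]

section Exponents

variable {R : Type*} [CommSemiring R]

/-- The exponent of the monomial `x^a y^e`, with `x = X 0` and `y = X 1`. -/
noncomputable def expXY (a e : ℕ) : Fin 2 →₀ ℕ := Finsupp.single 0 a + Finsupp.single 1 e

@[simp] theorem expXY_apply_zero (a e : ℕ) : expXY a e 0 = a := by simp [expXY]

@[simp] theorem expXY_apply_one (a e : ℕ) : expXY a e 1 = e := by simp [expXY]

theorem expXY_eta (m : Fin 2 →₀ ℕ) : expXY (m 0) (m 1) = m :=
  Finsupp.ext_fin_two (by simp) (by simp)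

theorem expXY_inj {a e a' e' : ℕ} : expXY a e = expXY a' e' ↔ a = a' ∧ e = e' :=
  ⟨fun h => ⟨by simpa using congr($h 0), by simpa using congr($h 1)⟩,
    fun ⟨ha, he⟩ => ha ▸ he ▸ rfl⟩

theorem expXY_add_single_zero (a e : ℕ) : expXY a e + Finsupp.single 0 1 = expXY (a + 1) e :=
  Finsupp.ext_fin_two (by simp) (by simp)

theorem expXY_add_single_one (a e : ℕ) : expXY a e + Finsupp.single 1 1 = expXY a (e + 1) :=
  Finsupp.ext_fin_two (by simp) (by simp)

theorem expXY_sub_single_zero (a e : ℕ) : expXY a e - Finsupp.single 0 1 = expXY (a - 1) e :=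
  Finsupp.ext_fin_two (by simp) (by simp)

theorem expXY_sub_single_one (a e n : ℕ) : expXY a e - Finsupp.single 1 n = expXY a (e - n) :=
  Finsupp.ext_fin_two (by simp) (by simp)

theorem coeff_expXY_pderiv_zero (a e : ℕ) (p : MvPolynomial (Fin 2) R) :
    coeff (expXY a e) (pderiv 0 p) = coeff (expXY (a + 1) e) p * ↑(a + 1) := by
  simp [coeff_pderiv, expXY_add_single_zero]

theorem coeff_expXY_pderiv_one (a e : ℕ) (p : MvPolynomial (Fin 2) R) :
    coeff (expXY a e) (pderiv 1 p) = coeff (expXY a (e + 1)) p * ↑(e + 1) := by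
  simp [coeff_pderiv, expXY_add_single_one]

theorem coeff_expXY_X_one_pow_mul (a e n : ℕ) (p : MvPolynomial (Fin 2) R) :
    coeff (expXY a e) (X 1 ^ n * p) = if n ≤ e then coeff (expXY a (e - n)) p else 0 := by
  simp only [X_pow_eq_monomial, coeff_monomial_mul', Finsupp.single_le_iff, expXY_apply_one,
    one_mul, expXY_sub_single_one]

theorem coeff_expXY_X_zero_mul (a e : ℕ) (p : MvPolynomial (Fin 2) R) :
    coeff (expXY a e) (X 0 * p) = if 0 < a then coeff (expXY (a - 1) e) p else 0 := by
  simp only [coeff_X_mul', Finsupp.mem_support_iff, expXY_apply_zero, pos_iff_ne_zero,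
    expXY_sub_single_zero]

theorem coeff_expXY_aeval_X_zero (a e : ℕ) (g : Polynomial R) :
    coeff (expXY a e) (Polynomial.aeval (X 0 : MvPolynomial (Fin 2) R) g) =
      if e = 0 then g.coeff a else 0 := by
  induction g using Polynomial.induction_on' with
  | add p q hp hq =>
    simp only [map_add, coeff_add, hp, hq, Polynomial.coeff_add]
    split_ifs <;> simp
  | monomial n r =>
    rw [Polynomial.aeval_monomial, algebraMap_eq, X_pow_eq_monomial, C_mul_monomial, mul_one,
      show Finsupp.single 0 n = expXY n 0 from Finsupp.ext_fin_two (by simp) (by simp),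
      coeff_monomial, Polynomial.coeff_monomial]
    by_cases he : e = 0 <;> simp [expXY_inj, he, eq_comm]

theorem coeff_expXY_eq_zero_of_degreeOf_lt {p : MvPolynomial (Fin 2) R} {a : ℕ}
    (ha : p.degreeOf 0 < a) (e : ℕ) : coeff (expXY a e) p = 0 :=
  notMem_support_iff.mp (notMem_support_of_degreeOf_lt 0 (by simpa using ha))

theorem eq_C_of_coeff_expXY_eq_zero {p : MvPolynomial (Fin 2) R}
    (h : ∀ a e, a ≠ 0 ∨ e ≠ 0 → coeff (expXY a e) p = 0) : p = C (coeff 0 p) := by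
  ext m
  rw [coeff_C]
  split_ifs with hm
  · rw [hm]
  · rw [← expXY_eta m]
    apply h
    by_contra! h0
    exact hm (Finsupp.ext_fin_two (by simp [h0.1]) (by simp [h0.2]))

end Exponents

/-- The coefficient of `x^a y^e` in `y^{m1} f_x + f_y + y^{m2} x f_y = g(x)`, where `c a e` is the
coefficient of `x^a y^e` in `f` and `g a` that of `x^a` in `g`. -/
def CoeffRecurrence {k : Type*} [Semiring k] (m1 m2 : ℕ) (c : ℕ → ℕ → k) (g : ℕ → k) :
    Prop :=
  ∀ a e, ((if m1 ≤ e then c (a + 1) (e - m1) * ↑(a + 1) else 0) + c a (e + 1) * ↑(e + 1) +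
    if m2 ≤ e then (if 0 < a then c (a - 1) (e - m2 + 1) * ↑(e - m2 + 1) else 0) else 0) =
    if e = 0 then g a else 0

theorem coeffRecurrence_of_derivation {R : Type*} [CommSemiring R] {m1 m2 : ℕ}
    {d : Derivation R (MvPolynomial (Fin 2) R) (MvPolynomial (Fin 2) R)}
    (hdx : d (X 0) = X 1 ^ m1) (hdy : d (X 1) = 1 + X 1 ^ m2 * X 0)
    {f : MvPolynomial (Fin 2) R} {g : Polynomial R}
    (hf : d f = Polynomial.aeval (X 0 : MvPolynomial (Fin 2) R) g) :
    CoeffRecurrence m1 m2 (fun a e => coeff (expXY a e) f) g.coeff := by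
  have hd : d f = X 1 ^ m1 * pderiv 0 f + pderiv 1 f + X 1 ^ m2 * (X 0 * pderiv 1 f) := by
    rw [d.eq_sum_smul_pderiv]
    simp only [Fin.sum_univ_two, hdx, hdy, Derivation.add_apply, Derivation.smul_apply,
      smul_eq_mul]
    ring
  intro a e
  simpa only [coeff_add, coeff_expXY_X_one_pow_mul, coeff_expXY_X_zero_mul,
    coeff_expXY_pderiv_zero, coeff_expXY_pderiv_one, coeff_expXY_aeval_X_zero] using
    congr_arg (coeff (expXY a e)) (hd.symm.trans hf)

namespace CoeffRecurrence

variable {k : Type*} [Semiring k] [NoZeroDivisors k] [CharZero k] {m1 m2 : ℕ}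
  {c : ℕ → ℕ → k} {g : ℕ → k} (hrec : CoeffRecurrence m1 m2 c g)
include hrec

theorem coeff_eq_zero_of_rows_above (hm2 : 0 < m2) {a e : ℕ} (h2 : ∀ e, c (a + 2) e = 0)
    (h1 : ∀ e, 0 < e → c (a + 1) e = 0) (he : 0 < e) : c a e = 0 := by
  have h := hrec (a + 1) (e + m2 - 1)
  rw [show e + m2 - 1 - m2 + 1 = e by omega, show e + m2 - 1 + 1 = e + m2 by omega, h2,
    h1 _ (by omega), show a + 1 - 1 = a by omega] at h
  simpa [show m2 ≤ e + m2 - 1 by omega, show e + m2 - 1 ≠ 0 by omega, he.ne'] using h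

theorem coeff_sub_ne_zero {a e : ℕ} (hlt : e < m1) (he : e ≠ 0) (hc : c a (e + 1) ≠ 0) :
    0 < a ∧ m2 ≤ e ∧ c (a - 1) (e - m2 + 1) ≠ 0 := by
  have h := hrec a e
  rw [if_neg (by omega), if_neg he, zero_add] at h
  by_contra! hcon
  have hlead : c a (e + 1) * ↑(e + 1) = 0 := by
    split_ifs at h with hm ha
    · simpa [hcon ha hm] using h
    all_goals simpa using h
  exact hc ((mul_eq_zero.mp hlead).resolve_right (Nat.cast_ne_zero.mpr e.succ_ne_zero))

theorem coeff_eq_zero_of_modEq (hm2 : 0 < m2) (hdvd : ¬ m2 ∣ m1) (e : ℕ) :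
    ∀ a, e < m1 → e ≡ m1 [MOD m2] → c a (e + 1) = 0 := by
  induction e using Nat.strong_induction_on with
  | _ e ih =>
  intro a hlt hmod
  by_contra hc
  have he : e ≠ 0 := by
    rintro rfl
    exact hdvd (Nat.modEq_zero_iff_dvd.mp hmod.symm)
  obtain ⟨-, hle, hc'⟩ := hrec.coeff_sub_ne_zero hlt he hc
  exact hc' (ih (e - m2) (by omega) _ (by omega)
    ((Nat.modEq_sub_modulus_iff hle).mpr hmod.symm).symm)

theorem row_eq_zero_of_rows_above (hm2 : 0 < m2) (hdvd : ¬ m2 ∣ m1) {A : ℕ} (hA : 0 < A)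
    (habove : ∀ a > A, ∀ e, c a e = 0) (e : ℕ) : c A e = 0 := by
  have hrow : ∀ e, 0 < e → c A e = 0 := fun e he =>
    hrec.coeff_eq_zero_of_rows_above hm2 (habove _ (by omega))
      (fun e _ => habove _ (by omega) e) he
  rcases Nat.eq_zero_or_pos e with rfl | he
  swap
  · exact hrow e he
  have hrow' : ∀ e, 0 < e → c (A - 1) e = 0 := fun e he =>
    hrec.coeff_eq_zero_of_rows_above hm2 (a := A - 1)
      (by rw [show A - 1 + 2 = A + 1 by omega]; exact habove _ (by omega))
      (by rwa [show A - 1 + 1 = A by omega]) he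
  have hm1 : m1 ≠ 0 := by rintro rfl; exact hdvd (dvd_zero m2)
  have hdesc : m2 ≤ m1 → c (A - 1 - 1) (m1 - m2 + 1) = 0 := fun hm =>
    hrec.coeff_eq_zero_of_modEq hm2 hdvd _ _ (by omega)
      ((Nat.modEq_sub_modulus_iff hm).mpr rfl).symm
  have h := hrec (A - 1) m1
  rw [if_pos le_rfl, if_neg hm1, hrow' _ (by omega), Nat.sub_self,
    show A - 1 + 1 = A by omega] at h
  by_cases hm : m2 ≤ m1
  · simpa [hdesc hm, hA.ne'] using h
  · simpa [hm, hA.ne'] using h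

theorem rows_pos_eq_zero (hm2 : 0 < m2) (hdvd : ¬ m2 ∣ m1) {N : ℕ}
    (hN : ∀ a > N, ∀ e, c a e = 0) : ∀ a, 0 < a → ∀ e, c a e = 0 := by
  intro a
  induction a using Nat.strong_decreasing_induction with
  | base => exact ⟨N, fun a ha _ => hN a ha⟩
  | step A ih =>
    exact fun hA => hrec.row_eq_zero_of_rows_above hm2 hdvd hA fun a ha => ih a ha (by omega)

theorem eq_zero (hm2 : 0 < m2) (hdvd : ¬ m2 ∣ m1) {N : ℕ} (hN : ∀ a > N, ∀ e, c a e = 0) :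
    (∀ a e, a ≠ 0 ∨ e ≠ 0 → c a e = 0) ∧ ∀ a, g a = 0 := by
  have hrows := hrec.rows_pos_eq_zero hm2 hdvd hN
  have hcoeff : ∀ a e, a ≠ 0 ∨ e ≠ 0 → c a e = 0 := by
    rintro (_ | a) e h
    · exact hrec.coeff_eq_zero_of_rows_above hm2 (hrows 2 two_pos)
        (fun e _ => hrows 1 one_pos e) (by omega)
    · exact hrows (a + 1) a.succ_pos e
  refine ⟨hcoeff, fun a => ?_⟩
  have hm1 : m1 ≠ 0 := by rintro rfl; exact hdvd (dvd_zero m2)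
  simpa [hm1, hm2.ne', hcoeff a 1 (Or.inr one_ne_zero)] using (hrec a 0).symm

end CoeffRecurrence

theorem stmt0_general (k : Type*) [Field k] [CharZero k]
    (m1 m2 : ℕ) (hm2 : 0 < m2) (hdvd : ¬ m2 ∣ m1)
    (d : Derivation k (MvPolynomial (Fin 2) k) (MvPolynomial (Fin 2) k))
    (hdx : d (X 0) = X 1 ^ m1)
    (hdy : d (X 1) = 1 + X 1 ^ m2 * X 0)
    (f : MvPolynomial (Fin 2) k) (g : Polynomial k)
    (hf : d f = Polynomial.aeval (X 0 : MvPolynomial (Fin 2) k) g) :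
    (∃ c : k, f = C c) ∧ g = 0 := by
  obtain ⟨hcoeff, hg⟩ := (coeffRecurrence_of_derivation hdx hdy hf).eq_zero hm2 hdvd
    (N := f.degreeOf 0) fun _ ha => coeff_expXY_eq_zero_of_degreeOf_lt ha
  exact ⟨⟨coeff 0 f, eq_C_of_coeff_expXY_eq_zero hcoeff⟩, Polynomial.ext hg⟩

/-- For `d = y^{m1} ∂_x + (1 + y^{m2} x) ∂_y` on `k[x,y]` with `m2 ∤ m1`,
if `d f = g(x)` for some `g ∈ k[x]` then `f` is constant and `g = 0`. -/
theorem stmt0 (k : Type*) [Field k] [CharZero k]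
    (m1 m2 : ℕ) (hm1 : 0 < m1) (hm2 : 0 < m2) (hdvd : ¬ m2 ∣ m1)
    (d : Derivation k (MvPolynomial (Fin 2) k) (MvPolynomial (Fin 2) k))
    (hdx : d (X 0) = X 1 ^ m1)
    (hdy : d (X 1) = 1 + X 1 ^ m2 * X 0)
    (f : MvPolynomial (Fin 2) k) (g : Polynomial k)
    (hf : d f = Polynomial.aeval (X 0 : MvPolynomial (Fin 2) k) g) :
    (∃ c : k, f = C c) ∧ g = 0 :=
  stmt0_general k m1 m2 hm2 hdvd d hdx hdy f g hf
end

section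
/- Let k be a field of characteristic zero, R₂ = k[x₁, x₂], and let d₂ be a derivation of R₂ with the property that whenever d₂(r) = g(x₂) for r ∈ R₂ and g ∈ k[x₂], then r ∈ k and g = 0. If d₂ is simple and g₂ ∈ k[x₂] \ k, then the derivation d₃ = d₂ + g₂(x₂) ∂_{x₃} of R₃ = k[x₁, x₂, x₃] is simple. -/
open Polynomial in
lemma coeffD {A : Type*} [CommRing A] (d : A → A) (G : A)
    (D : Polynomial A → Polynomial A)
    (hadd : ∀ f g, D (f + g) = D f + D g)
    (hmul : ∀ f g, D (f * g) = f * D g + g * D f)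
    (hC : ∀ a, D (C a) = C (d a))
    (hX : D X = C G)
    (hd0 : d 0 = 0)
    (hdadd : ∀ a b, d (a + b) = d a + d b) :
    ∀ (p : Polynomial A) (i : ℕ),
      (D p).coeff i = d (p.coeff i) + ((i + 1 : ℕ) : A) * (p.coeff (i + 1) * G) := by
  have hpow : ∀ m : ℕ, D (X ^ (m + 1)) = ((m + 1 : ℕ) : A) • (X ^ m * C G) := by
    intro m
    induction m with
    | zero => simp [hX]
    | succ m ih =>
      have h : (X : Polynomial A) ^ (m + 1 + 1) = X ^ (m + 1) * X := by ring
      rw [h, hmul, ih, hX]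
      simp only [smul_eq_C_mul, map_natCast]
      push_cast
      ring
  intro p
  induction p using Polynomial.induction_on' with
  | add f g hf hg =>
    intro i
    rw [hadd]
    simp [hf, hg, hdadd]
    ring
  | monomial n a =>
    intro i
    rcases n with _ | m
    · rw [Polynomial.monomial_zero_left, hC]
      simp [Polynomial.coeff_C, hd0]
      split_ifs <;> simp [hd0]
    · rw [← Polynomial.C_mul_X_pow_eq_monomial, hmul, hpow, hC]
      have e1 : C a * (((m + 1 : ℕ) : A) • (X ^ m * C G)) + X ^ (m + 1) * C (d a)
          = C (a * (((m + 1 : ℕ) : A) * G)) * X ^ m + C (d a) * X ^ (m + 1) := by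
        simp only [smul_eq_C_mul, map_natCast, map_mul]
        push_cast
        ring
      rw [e1]
      simp only [Polynomial.coeff_add, Polynomial.coeff_C_mul, Polynomial.coeff_X_pow,
        mul_ite, mul_zero, mul_one, Polynomial.coeff_monomial]
      by_cases h1 : i = m + 1
      · subst h1
        simp [hd0, (by omega : ¬ (m + 1 = m))]
      · by_cases h2 : i = m
        · subst h2
          simp [h1, hd0]
          ring
        · simp [h1, h2, (by omega : ¬ (i + 1 = m + 1)), hd0]

open Polynomial in
lemma polyKey {A : Type*} [CommRing A] (d : A → A) (G : A)
    (D : Polynomial A → Polynomial A)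
    (hcoeff : ∀ (p : Polynomial A) (i : ℕ),
      (D p).coeff i = d (p.coeff i) + ((i + 1 : ℕ) : A) * (p.coeff (i + 1) * G))
    (hd0 : d 0 = 0) (hd1 : d 1 = 0)
    (hsimp : ∀ L : Ideal A, (∀ a ∈ L, d a ∈ L) → L = ⊥ ∨ L = ⊤)
    (hnz : ∀ (a : A) (m : ℕ), d a ≠ -(((m + 1 : ℕ) : A) * G))
    (J : Ideal (Polynomial A)) (hJD : ∀ f ∈ J, D f ∈ J) (hJne : J ≠ ⊥) :
    (1 : Polynomial A) ∈ J := by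
  obtain ⟨p0, hp0J, hp0ne⟩ : ∃ p0 ∈ J, p0 ≠ 0 := by
    by_contra h
    push_neg at h
    exact hJne (le_antisymm (fun x hx => by
      simpa using h x hx) bot_le)
  set S : Set ℕ := {m | ∃ p ∈ J, p ≠ 0 ∧ p.natDegree = m} with hS
  have hSne : S.Nonempty := ⟨p0.natDegree, p0, hp0J, hp0ne, rfl⟩
  set n := sInf S with hn
  obtain ⟨q0, hq0J, hq0ne, hq0deg⟩ : ∃ p ∈ J, p ≠ 0 ∧ p.natDegree = n := Nat.sInf_mem hSne
  have hmin : ∀ q ∈ J, q ≠ 0 → n ≤ q.natDegree := fun q hq hqne =>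
    Nat.sInf_le ⟨q, hq, hqne, rfl⟩
  -- the ideal of "leading coefficients at degree n"
  set L : Ideal A :=
    { carrier := {a | ∃ p ∈ J, (∀ m, n < m → p.coeff m = 0) ∧ p.coeff n = a}
      add_mem' := by
        rintro a b ⟨p, hp, hpb, hpa⟩ ⟨q, hq, hqb, hqa⟩
        exact ⟨p + q, J.add_mem hp hq, fun m hm => by simp [hpb m hm, hqb m hm],
          by simp [hpa, hqa]⟩
      zero_mem' := ⟨0, J.zero_mem, by simp, by simp⟩
      smul_mem' := by
        rintro b a ⟨p, hp, hpb, hpa⟩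
        exact ⟨C b * p, J.mul_mem_left _ hp,
          fun m hm => by simp [Polynomial.coeff_C_mul, hpb m hm],
          by simp [Polynomial.coeff_C_mul, hpa]⟩ } with hL
  have hLmem : ∀ a, a ∈ L ↔ ∃ p ∈ J, (∀ m, n < m → p.coeff m = 0) ∧ p.coeff n = a :=
    fun a => Iff.rfl
  have hLD : ∀ a ∈ L, d a ∈ L := by
    rintro a ⟨p, hp, hpb, hpa⟩
    refine ⟨D p, hJD p hp, fun m hm => ?_, ?_⟩
    · rw [hcoeff, hpb m hm, hpb (m + 1) (by omega), hd0]
      ring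
    · rw [hcoeff, hpa, hpb (n + 1) (by omega)]
      ring
  have hLne : L ≠ ⊥ := by
    intro hbot
    have : q0.coeff n ∈ L := ⟨q0, hq0J, fun m hm =>
      Polynomial.coeff_eq_zero_of_natDegree_lt (hq0deg ▸ hm), rfl⟩
    rw [hbot, Ideal.mem_bot] at this
    rw [← hq0deg] at this
    exact hq0ne (Polynomial.leadingCoeff_eq_zero.mp this)
  have hLtop : L = ⊤ := (hsimp L hLD).resolve_left hLne
  have h1L : (1 : A) ∈ L := hLtop ▸ Submodule.mem_top
  obtain ⟨p, hpJ, hpb, hp1⟩ := h1L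
  rcases Nat.eq_zero_or_pos n with hn0 | hnpos
  · -- p = 1
    have : p = 1 := by
      ext i
      rcases Nat.eq_zero_or_pos i with hi | hi
      · subst hi
        rw [Polynomial.coeff_one, if_pos rfl, ← hn0]
        exact hp1
      · rw [Polynomial.coeff_one, hpb i (by omega), if_neg (by omega)]
    exact this ▸ hpJ
  · exfalso
    obtain ⟨m0, hm0⟩ : ∃ m0, n = m0 + 1 := ⟨n - 1, by omega⟩
    set q := D p with hq
    have hqJ : q ∈ J := hJD p hpJ
    have hqhigh : ∀ i, n ≤ i → q.coeff i = 0 := by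
      intro i hi
      rcases eq_or_lt_of_le hi with h | h
      · rw [hq, hcoeff, ← h, hp1, hd1, hpb (n + 1) (by omega)]
        ring
      · rw [hq, hcoeff, hpb i h, hpb (i + 1) (by omega), hd0]
        ring
    have hq0 : q = 0 := by
      by_contra hne
      have h1 := hmin q hqJ hne
      have h2 := hqhigh q.natDegree h1
      exact hne (Polynomial.leadingCoeff_eq_zero.mp h2)
    have := hcoeff p m0
    rw [← hq, hq0] at this
    simp only [Polynomial.coeff_zero] at this
    rw [← hm0, hp1] at this
    have hda : d (p.coeff m0) = -(((m0 + 1 : ℕ) : A) * G) := by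
      rw [hm0] at this
      push_cast at this ⊢
      linear_combination -this
    exact hnz _ _ hda

open MvPolynomial

/-- If `d₂` is a simple derivation of `k[x₁,x₂]` such that `d₂ r ∈ k[x₂]`
forces `r ∈ k` and `d₂ r = 0`, and `g₂ ∈ k[x₂] \ k`, then the extension
`d₃ = d₂ + g₂(x₂) ∂_{x₃}` of `k[x₁,x₂,x₃]` is simple. -/
theorem stmt6 (k : Type*) [Field k] [CharZero k]
    (d2 : Derivation k (MvPolynomial (Fin 2) k) (MvPolynomial (Fin 2) k))
    (hprop : ∀ (r : MvPolynomial (Fin 2) k) (g : Polynomial k),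
      d2 r = Polynomial.aeval (X 1 : MvPolynomial (Fin 2) k) g → (∃ c : k, r = C c) ∧ g = 0)
    (hsimple : ∀ I : Ideal (MvPolynomial (Fin 2) k), (∀ f ∈ I, d2 f ∈ I) → I = ⊥ ∨ I = ⊤)
    (g2 : Polynomial k) (hg2 : 0 < g2.natDegree)
    (d3 : Derivation k (MvPolynomial (Fin 3) k) (MvPolynomial (Fin 3) k))
    (hres : ∀ j : Fin 2, d3 (X (Fin.castSucc j)) = rename Fin.castSucc (d2 (X j)))
    (hX3 : d3 (X 2) = Polynomial.aeval (X 1 : MvPolynomial (Fin 3) k) g2) :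
    ∀ I : Ideal (MvPolynomial (Fin 3) k), (∀ f ∈ I, d3 f ∈ I) → I = ⊥ ∨ I = ⊤ := by
  intro I hI
  by_cases hIbot : I = ⊥
  · exact Or.inl hIbot
  right
  set A := MvPolynomial (Fin 2) k with hA
  let e : Fin 3 ≃ Fin 3 := finRotate 3
  let φ : MvPolynomial (Fin 3) k ≃ₐ[k] Polynomial A :=
    (MvPolynomial.renameEquiv k e).trans (MvPolynomial.finSuccEquiv k 2)
  have hφX : ∀ i : Fin 3, φ (X i) = MvPolynomial.finSuccEquiv k 2 (X (e i)) := by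
    intro i
    simp [φ, MvPolynomial.renameEquiv_apply, MvPolynomial.rename_X]
  have hφ2 : φ (X 2) = Polynomial.X := by
    rw [hφX]
    have h2 : e 2 = 0 := by decide
    rw [h2]
    exact MvPolynomial.finSuccEquiv_X_zero
  have hecast : ∀ j : Fin 2, e (Fin.castSucc j) = Fin.succ j := by decide
  have hφcast : ∀ j : Fin 2, φ (X (Fin.castSucc j)) = Polynomial.C (X j) := by
    intro j
    rw [hφX, hecast j]
    exact MvPolynomial.finSuccEquiv_X_succ
  have halg3 : algebraMap k (MvPolynomial (Fin 3) k) = C := MvPolynomial.algebraMap_eq k (Fin 3)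
  have halg2 : algebraMap k A = C := MvPolynomial.algebraMap_eq k (Fin 2)
  have hcomm : ∀ r : A, d3 (rename Fin.castSucc r) = rename Fin.castSucc (d2 r) := by
    intro r
    induction r using MvPolynomial.induction_on with
    | C c =>
      rw [MvPolynomial.rename_C, ← halg3, ← halg2, Derivation.map_algebraMap,
        Derivation.map_algebraMap, map_zero]
    | add p q hp hq => simp [map_add, hp, hq]
    | mul_X p j hp =>
      rw [map_mul, MvPolynomial.rename_X, Derivation.leibniz, Derivation.leibniz]
      simp only [smul_eq_mul, map_add, map_mul, MvPolynomial.rename_X, hres, hp]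
  have hφrename : ∀ r : A, φ (rename Fin.castSucc r) = Polynomial.C r := by
    intro r
    induction r using MvPolynomial.induction_on with
    | C c =>
      rw [MvPolynomial.rename_C, ← halg3, AlgEquiv.commutes, Polynomial.algebraMap_apply, halg2]
    | add p q hp hq => simp [map_add, hp, hq]
    | mul_X p j hp =>
      rw [map_mul, MvPolynomial.rename_X, map_mul, hφcast, hp, map_mul]
  have hsymmC : ∀ r : A, φ.symm (Polynomial.C r) = rename Fin.castSucc r := by
    intro r
    rw [← hφrename r, AlgEquiv.symm_apply_apply]
  have hsymmX : φ.symm Polynomial.X = X 2 := by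
    rw [← hφ2, AlgEquiv.symm_apply_apply]
  set G : A := Polynomial.aeval (X 1 : A) g2 with hG
  set Df : Polynomial A → Polynomial A := fun f => φ (d3 (φ.symm f)) with hDf
  have hDfadd : ∀ f g, Df (f + g) = Df f + Df g := by
    intro f g; simp [hDf, map_add]
  have hDfmul : ∀ f g, Df (f * g) = f * Df g + g * Df f := by
    intro f g
    simp only [hDf, map_mul, Derivation.leibniz, smul_eq_mul, map_add]
    rw [AlgEquiv.apply_symm_apply, AlgEquiv.apply_symm_apply]
  have hDfC : ∀ a : A, Df (Polynomial.C a) = Polynomial.C (d2 a) := by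
    intro a
    rw [hDf]
    simp only
    rw [hsymmC, hcomm, hφrename]
  have hDfX : Df Polynomial.X = Polynomial.C G := by
    rw [hDf]
    simp only
    rw [hsymmX, hX3]
    have h1 : (X 1 : MvPolynomial (Fin 3) k) = rename Fin.castSucc (X 1 : A) := by
      rw [MvPolynomial.rename_X]; rfl
    rw [h1, Polynomial.aeval_algHom_apply (rename Fin.castSucc : A →ₐ[k] MvPolynomial (Fin 3) k),
      hφrename]
  have hcoeff := coeffD (fun a => d2 a) G Df hDfadd hDfmul hDfC hDfX (by simp) (by simp)
  have hnz : ∀ (a : A) (m : ℕ), d2 a ≠ -(((m + 1 : ℕ) : A) * G) := by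
    intro a m h
    have haev : d2 a = Polynomial.aeval (X 1 : A) (-((m + 1 : ℕ) : Polynomial k) * g2) := by
      rw [h, hG]
      simp only [map_mul, map_neg, map_natCast]
      push_cast
      ring
    have := (hprop a _ haev).2
    have hm1 : ((m + 1 : ℕ) : Polynomial k) ≠ 0 :=
      Nat.cast_ne_zero.mpr (Nat.succ_ne_zero m)
    have : g2 = 0 := by
      rcases mul_eq_zero.mp this with h' | h'
      · exact absurd (neg_eq_zero.mp h') hm1
      · exact h'
    rw [this] at hg2
    simp at hg2
  set J : Ideal (Polynomial A) := Ideal.comap φ.symm.toAlgHom.toRingHom I with hJ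
  have hJmem : ∀ f : Polynomial A, f ∈ J ↔ φ.symm f ∈ I := fun f => Iff.rfl
  have hJD : ∀ f ∈ J, Df f ∈ J := by
    intro f hf
    rw [hJmem] at hf ⊢
    rw [hDf]
    simp only [AlgEquiv.symm_apply_apply]
    exact hI _ hf
  have hJne : J ≠ ⊥ := by
    intro hbot
    apply hIbot
    rw [eq_bot_iff]
    intro x hx
    have : φ x ∈ J := by rw [hJmem, AlgEquiv.symm_apply_apply]; exact hx
    rw [hbot, Ideal.mem_bot] at this
    have : x = 0 := by
      have := congrArg φ.symm this
      rwa [AlgEquiv.symm_apply_apply, map_zero] at this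
    simp [this]
  have h1 : (1 : Polynomial A) ∈ J :=
    polyKey (fun a => d2 a) G Df hcoeff (by simp) (by simp) hsimple hnz J hJD hJne
  rw [hJmem, map_one] at h1
  exact (Ideal.eq_top_iff_one I).mpr h1
end

section
/- Let k be a field of characteristic zero, i ≥ 2, n > i, and let d_i be a derivation of R_i = k[x₁,…,x_i] such that whenever d_i(r) ∈ k[x_i] with deg_{x_i} ≤ l, then r ∈ k and d_i(r) = 0. Let d_n = d_i + g_i(x_i)∂_{x_{i+1}} + … + g_{n-1}(x_{n-1})∂_{x_n} be a derivation of R_n = k[x₁,…,x_n], where g_j ∈ k[x_j] \ k for i ≤ j ≤ n-1 and deg_{x_i} g_i ≤ l. If d_i is a simple derivation, then d_n is a simple derivation of R_n. -/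
/-!
Induction on the number of variables, through `k[x₁,…,x_{m+1}] = k[x₁,…,x_m][x_{m+1}]`, where
`d_{m+1}` extends `d_m` by `x_{m+1} ↦ g_m(x_m)`. Condition (i) passes up one step: if
`d_{m+1} p = h(x_{m+1})`, the coefficients satisfy `d_m(p_r) = h_r - (r+1) p_{r+1} g_m(x_m)`, so
descending from the top, (i) for `d_m` forces every `p_r ∈ k`, then `p_{r+1} = 0` (as `g_m` is
not constant) and `h_r = 0`. The new condition holds without degree bound, which is why only
`g_i` needs `deg ≤ l`. Simplicity passes up as well: for a stable ideal `I` with minimal degree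
`m`, the ideal of `m`-th coefficients of its elements of degree `≤ m` is `d_m`-stable and nonzero,
so it contains `1`: some `f ∈ I` of degree `≤ m` has `m`-th coefficient `1`. Then
`d_{m+1} f ∈ I` has degree `< m`, so it vanishes, and (i) makes `f` a constant, necessarily `1`.
-/

open scoped Polynomial

namespace Derivation

variable {k A B : Type*} [CommRing k] [CommRing A] [CommRing B] [Algebra k A] [Algebra k B]

def IsSimple (D : Derivation k A A) : Prop :=
  ∀ I : Ideal A, (∀ f ∈ I, D f ∈ I) → I = ⊥ ∨ I = ⊤

-- Condition (i) of the paper, at the variable `t`.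
def IsPolyRigid (D : Derivation k A A) (t : A) (l : ℕ∞) : Prop :=
  ∀ (a : A) (g : k[X]), (g.natDegree : ℕ∞) ≤ l → D a = Polynomial.aeval t g →
    (∃ c : k, a = algebraMap k A c) ∧ g = 0

noncomputable def conj (e : A ≃ₐ[k] B) (D : Derivation k A A) : Derivation k B B where
  toLinearMap := e.toLinearMap ∘ₗ D.toLinearMap ∘ₗ e.symm.toLinearMap
  map_one_eq_zero' := by simp
  leibniz' a b := by simp

@[simp]
theorem conj_apply (e : A ≃ₐ[k] B) (D : Derivation k A A) (b : B) :
    D.conj e b = e (D (e.symm b)) :=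
  rfl

theorem IsSimple.of_conj {e : A ≃ₐ[k] B} {D : Derivation k A A} (h : (D.conj e).IsSimple) :
    D.IsSimple := by
  intro I hI
  have hcomap : I = (I.comap e.symm).comap e := by ext; simp [Ideal.mem_comap]
  have hstable : ∀ f ∈ I.comap e.symm, D.conj e f ∈ I.comap e.symm := by
    intro f hf
    simpa [Ideal.mem_comap] using hI _ hf
  rcases h _ hstable with hbot | htop
  · exact Or.inl (by rw [hcomap, hbot]; exact Ideal.comap_bot_of_injective _ e.injective)
  · exact Or.inr (by rw [hcomap, htop, Ideal.comap_top])

theorem IsPolyRigid.of_conj {e : A ≃ₐ[k] B} {D : Derivation k A A} {t : A} {l : ℕ∞}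
    (h : (D.conj e).IsPolyRigid (e t) l) : D.IsPolyRigid t l := by
  intro a g hg hDa
  have hconj : D.conj e (e a) = Polynomial.aeval (e t) g := by
    rw [conj_apply, e.symm_apply_apply, hDa]
    exact (Polynomial.aeval_algHom_apply (e : A →ₐ[k] B) t g).symm
  obtain ⟨⟨c, hc⟩, hg0⟩ := h (e a) g hg hconj
  exact ⟨⟨c, e.injective (by rw [hc, e.commutes])⟩, hg0⟩

end Derivation

namespace Polynomial

theorem _root_.Ideal.mem_leadingCoeffNth_iff_coeff {R : Type*} [CommRing R] {I : Ideal R[X]}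
    {n : ℕ} {x : R} : x ∈ I.leadingCoeffNth n ↔ ∃ p ∈ I, p.natDegree ≤ n ∧ p.coeff n = x := by
  simp only [Ideal.leadingCoeffNth, Ideal.degreeLE, Submodule.mem_map, Submodule.mem_inf,
    mem_degreeLE, Ideal.mem_ofPolynomial, lcoeff_apply, natDegree_le_iff_degree_le]
  exact exists_congr fun p ↦ by tauto

variable {k A : Type*} [CommRing k] [CommRing A] [Algebra k A]

structure IsDerivationExtension (D' : Derivation k A[X] A[X]) (D : Derivation k A A) (s : A) :
    Prop where
  map_C : ∀ a, D' (C a) = C (D a)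
  map_X : D' X = C s

namespace IsDerivationExtension

variable {D' : Derivation k A[X] A[X]} {D : Derivation k A A} {s : A}

theorem coeff_apply (h : IsDerivationExtension D' D s) (p : A[X]) (r : ℕ) :
    (D' p).coeff r = D (p.coeff r) + (r + 1) • (s * p.coeff (r + 1)) := by
  induction p using Polynomial.induction_on' with
  | add p q hp hq => simp only [map_add, coeff_add, hp, hq, smul_add, mul_add]; abel
  | monomial n a =>
    rw [← C_mul_X_pow_eq_monomial, Derivation.leibniz, D'.leibniz_pow, h.map_X, h.map_C]
    rcases n with _ | n
    · simp [coeff_C]; split <;> simp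
    · simp only [smul_eq_mul, Nat.add_sub_cancel, coeff_add, coeff_smul, coeff_C_mul, coeff_mul_C,
        coeff_X_pow]
      rcases eq_or_ne r n with rfl | hr
      · simp
        ring
      · simp [hr, apply_ite D]

theorem natDegree_apply_le (h : IsDerivationExtension D' D s) {p : A[X]} {m : ℕ}
    (hp : p.natDegree ≤ m) : (D' p).natDegree ≤ m := by
  rw [natDegree_le_iff_coeff_eq_zero]
  intro r hr
  rw [h.coeff_apply, coeff_eq_zero_of_natDegree_lt (hp.trans_lt hr),
    coeff_eq_zero_of_natDegree_lt (show p.natDegree < r + 1 by omega), map_zero, mul_zero,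
    smul_zero, zero_add]

theorem coeff_apply_of_natDegree_le (h : IsDerivationExtension D' D s) {p : A[X]} {m : ℕ}
    (hp : p.natDegree ≤ m) : (D' p).coeff m = D (p.coeff m) := by
  rw [h.coeff_apply, coeff_eq_zero_of_natDegree_lt (show p.natDegree < m + 1 by omega), mul_zero,
    smul_zero, add_zero]

theorem leadingCoeffNth_stable (h : IsDerivationExtension D' D s) {I : Ideal A[X]}
    (hI : ∀ f ∈ I, D' f ∈ I) (m : ℕ) : ∀ a ∈ I.leadingCoeffNth m, D a ∈ I.leadingCoeffNth m := by
  simp only [Ideal.mem_leadingCoeffNth_iff_coeff]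
  rintro _ ⟨p, hpI, hp, rfl⟩
  exact ⟨D' p, hI p hpI, h.natDegree_apply_le hp, h.coeff_apply_of_natDegree_le hp⟩

theorem isSimple (h : IsDerivationExtension D' D s) (hD : D.IsSimple)
    (hker : ∀ f, D' f = 0 → ∃ a, f = C a) : D'.IsSimple := by
  classical
  intro I hI
  refine or_iff_not_imp_left.2 fun hbot ↦ ?_
  have hex : ∃ m, ∃ f ∈ I, f ≠ 0 ∧ f.natDegree = m := by
    obtain ⟨f, hfI, hf⟩ := Submodule.exists_mem_ne_zero_of_ne_bot hbot
    exact ⟨_, f, hfI, hf, rfl⟩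
  set m := Nat.find hex
  have hmin : ∀ f ∈ I, f ≠ 0 → m ≤ f.natDegree :=
    fun f hfI hf ↦ Nat.find_min' hex ⟨f, hfI, hf, rfl⟩
  have htop : I.leadingCoeffNth m = ⊤ := by
    refine (hD _ (h.leadingCoeffNth_stable hI m)).resolve_left fun hbot' ↦ ?_
    obtain ⟨f, hfI, hf, hdeg⟩ := Nat.find_spec hex
    have hlead : f.leadingCoeff ∈ I.leadingCoeffNth m :=
      Ideal.mem_leadingCoeffNth_iff_coeff.2 ⟨f, hfI, hdeg.le, by rw [leadingCoeff, hdeg]⟩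
    rw [hbot', Ideal.mem_bot, leadingCoeff_eq_zero] at hlead
    exact hf hlead
  obtain ⟨f, hfI, hdeg, hcoeff⟩ :=
    Ideal.mem_leadingCoeffNth_iff_coeff.1
      (htop ▸ Submodule.mem_top : (1 : A) ∈ I.leadingCoeffNth m)
  -- `D' f ∈ I` has `m`-th coefficient `D 1 = 0`, so degree `< m`.
  have hDf : D' f = 0 := by
    by_contra hne
    refine (hmin _ (hI f hfI) hne).not_gt
      (lt_of_le_of_ne (h.natDegree_apply_le hdeg) fun heq ↦ ?_)
    rw [← leadingCoeff_eq_zero, leadingCoeff, heq, h.coeff_apply_of_natDegree_le hdeg, hcoeff,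
      D.map_one_eq_zero] at hne
    exact hne rfl
  obtain ⟨a, rfl⟩ := hker f hDf
  rw [Ideal.eq_top_iff_one]
  rcases eq_or_ne m 0 with hm | hm
  · rw [hm, coeff_C_zero] at hcoeff
    rwa [hcoeff, C_1] at hfI
  · rw [coeff_C, if_neg hm] at hcoeff
    rw [← C_1, ← hcoeff, C_0]
    exact I.zero_mem

end IsDerivationExtension

section Field

variable {k A : Type*} [Field k] [CommRing A] [Algebra k A]

theorem _root_.Derivation.IsPolyRigid.of_apply_eq_sub_smul {D : Derivation k A A} {t : A}
    {l : ℕ∞} (hD : D.IsPolyRigid t l) {g : k[X]} (hg : 0 < g.natDegree)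
    (hgl : (g.natDegree : ℕ∞) ≤ l) {a : A} {c e : k}
    (ha : D a = algebraMap k A e - c • aeval t g) :
    (∃ c' : k, a = algebraMap k A c') ∧ c = 0 ∧ e = 0 := by
  have hdeg : ((C e - c • g).natDegree : ℕ∞) ≤ l := by
    refine le_trans ?_ hgl
    rw [Nat.cast_le]
    exact (natDegree_sub_le _ _).trans (max_le (by simp) (natDegree_smul_le _ _))
  obtain ⟨hconst, hzero⟩ := hD a (C e - c • g) hdeg (by simp [ha])
  rw [sub_eq_zero] at hzero
  obtain rfl : c = 0 := by
    by_contra hc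
    have := congrArg natDegree hzero
    rw [natDegree_C, natDegree_smul _ hc] at this
    omega
  exact ⟨hconst, rfl, by simpa using hzero⟩

theorem IsDerivationExtension.isPolyRigid [CharZero k] {D' : Derivation k A[X] A[X]}
    {D : Derivation k A A} {t : A} {l : ℕ∞} {g : k[X]}
    (h : IsDerivationExtension D' D (aeval t g)) (hD : D.IsPolyRigid t l)
    (hg : 0 < g.natDegree) (hgl : (g.natDegree : ℕ∞) ≤ l) : D'.IsPolyRigid X ⊤ := by
  intro p e _ hp
  have hcoeff (r : ℕ) : D (p.coeff r) + (r + 1) • (aeval t g * p.coeff (r + 1)) =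
      algebraMap k A (e.coeff r) := by
    rw [← h.coeff_apply, hp, ← aeval_map_algebraMap A, aeval_X_left_apply, coeff_map]
  have hstep (r : ℕ) (c : k) (hc : p.coeff (r + 1) = algebraMap k A c) :
      (∃ c' : k, p.coeff r = algebraMap k A c') ∧ c = 0 ∧ e.coeff r = 0 := by
    obtain ⟨hr, hc0, he⟩ := hD.of_apply_eq_sub_smul hg hgl (a := p.coeff r) (c := (r + 1) * c)
      (e := e.coeff r) (by rw [← hcoeff r, hc]; simp [Algebra.smul_def]; ring)
    exact ⟨hr, (mul_eq_zero.1 hc0).resolve_left (Nat.cast_add_one_ne_zero r), he⟩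
  have hscalar (r : ℕ) : ∃ c : k, p.coeff (r + 1) = algebraMap k A c := by
    suffices ∀ j r, p.natDegree < r + 1 + j → ∃ c : k, p.coeff (r + 1) = algebraMap k A c from
      this p.natDegree r (by omega)
    intro j
    induction j with
    | zero => exact fun r hr ↦ ⟨0, by rw [map_zero, coeff_eq_zero_of_natDegree_lt (by omega)]⟩
    | succ j ih =>
      intro r hr
      obtain ⟨c, hc⟩ := ih (r + 1) (by omega)
      exact (hstep (r + 1) c hc).1
  choose c hc using hscalar
  obtain ⟨c₀, hc₀⟩ := (hstep 0 (c 0) (hc 0)).1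
  refine ⟨⟨c₀, ?_⟩, ?_⟩
  · ext (_ | r)
    · simp [hc₀, algebraMap_apply]
    · rw [hc r, (hstep r _ (hc r)).2.1]
      simp [algebraMap_apply]
  · ext r
    exact (hstep r _ (hc r)).2.2

end Field

end Polynomial

namespace MvPolynomial

section FinSuccLast

variable (k : Type*) [CommSemiring k]

noncomputable def finSuccLastAlgEquiv (m : ℕ) :
    MvPolynomial (Fin (m + 1)) k ≃ₐ[k] (MvPolynomial (Fin m) k)[X] :=
  (renameEquiv k finSuccEquivLast).trans (optionEquivLeft k (Fin m))

variable {k}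

@[simp]
theorem finSuccLastAlgEquiv_X_castSucc (m : ℕ) (j : Fin m) :
    finSuccLastAlgEquiv k m (X j.castSucc) = Polynomial.C (X j) := by
  simp [finSuccLastAlgEquiv, optionEquivLeft_X_some]

@[simp]
theorem finSuccLastAlgEquiv_X_last (m : ℕ) :
    finSuccLastAlgEquiv k m (X (Fin.last m)) = Polynomial.X := by
  simp [finSuccLastAlgEquiv, optionEquivLeft_X_none]

theorem finSuccLastAlgEquiv_rename_castSucc (m : ℕ) (p : MvPolynomial (Fin m) k) :
    finSuccLastAlgEquiv k m (rename Fin.castSucc p) = Polynomial.C p := by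
  have h : (finSuccLastAlgEquiv k m).toAlgHom.comp (rename Fin.castSucc) = Polynomial.CAlgHom :=
    algHom_ext fun j ↦ by simp [Polynomial.CAlgHom]
  exact DFunLike.congr_fun h p

end FinSuccLast

section ExtendDerivation

variable {k : Type*} [CommRing k] {i : ℕ}
  (di : Derivation k (MvPolynomial (Fin i) k) (MvPolynomial (Fin i) k)) (G : ℕ → k[X])

-- The paper's `d_m` (variables 0-indexed): `d_i` on the first `i` variables, `X j ↦ G j (X (j-1))`
-- on the others.
noncomputable def extendDerivation (m : ℕ) (him : i ≤ m) :
    Derivation k (MvPolynomial (Fin m) k) (MvPolynomial (Fin m) k) :=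
  mkDerivation k fun j ↦
    if h : (j : ℕ) < i then rename (Fin.castLE him) (di (X ⟨j, h⟩))
    else Polynomial.aeval (X ⟨j - 1, by omega⟩) (G j)

theorem extendDerivation_X (m : ℕ) (him : i ≤ m) (j : Fin m) :
    extendDerivation di G m him (X j) =
      if h : (j : ℕ) < i then rename (Fin.castLE him) (di (X ⟨j, h⟩))
      else Polynomial.aeval (X ⟨j - 1, by omega⟩) (G j) :=
  mkDerivation_X _ _ _

theorem extendDerivation_self (h : i ≤ i) : extendDerivation di G i h = di :=
  derivation_ext fun j ↦ by simp [extendDerivation_X, rename_id]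

theorem extendDerivation_rename_castSucc {m : ℕ} (him : i ≤ m) (p : MvPolynomial (Fin m) k) :
    extendDerivation di G (m + 1) (by omega) (rename Fin.castSucc p) =
      rename Fin.castSucc (extendDerivation di G m him p) := by
  induction p using MvPolynomial.induction_on with
  | C c => simp
  | add p q hp hq => simp [hp, hq]
  | mul_X p j hp =>
    simp only [map_mul, Derivation.leibniz, rename_X, hp, extendDerivation_X, smul_eq_mul]
    by_cases hj : (j : ℕ) < i
    · simp [hj, rename_rename, Function.comp_def]
    · simp [hj, ← Polynomial.aeval_algHom_apply]

theorem isDerivationExtension_conj_extendDerivation (hi : 0 < i) {m : ℕ} (him : i ≤ m) :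
    Polynomial.IsDerivationExtension
      ((extendDerivation di G (m + 1) (by omega)).conj (finSuccLastAlgEquiv k m))
      (extendDerivation di G m him) (Polynomial.aeval (X ⟨m - 1, by omega⟩) (G m)) where
  map_C a := by
    rw [Derivation.conj_apply,
      (finSuccLastAlgEquiv k m).symm_apply_eq.2 (finSuccLastAlgEquiv_rename_castSucc m a).symm,
      extendDerivation_rename_castSucc di G him, finSuccLastAlgEquiv_rename_castSucc]
  map_X := by
    rw [Derivation.conj_apply,
      (finSuccLastAlgEquiv k m).symm_apply_eq.2 (finSuccLastAlgEquiv_X_last m).symm,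
      extendDerivation_X, dif_neg (by simp; omega)]
    have hlast : (⟨(Fin.last m : ℕ) - 1, by omega⟩ : Fin (m + 1)) =
        Fin.castSucc ⟨m - 1, by omega⟩ := rfl
    rw [hlast, ← Polynomial.aeval_algHom_apply, finSuccLastAlgEquiv_X_castSucc]
    exact Polynomial.aeval_algHom_apply Polynomial.CAlgHom _ _

end ExtendDerivation

section Simple

variable {k : Type*} [Field k] [CharZero k] {i : ℕ}
  (di : Derivation k (MvPolynomial (Fin i) k) (MvPolynomial (Fin i) k)) (G : ℕ → k[X])

theorem extendDerivation_succ (hi : 0 < i) {m : ℕ} (him : i ≤ m) {l : ℕ∞}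
    (hrigid : (extendDerivation di G m him).IsPolyRigid (X ⟨m - 1, by omega⟩) l)
    (hsimple : (extendDerivation di G m him).IsSimple)
    (hg : 0 < (G m).natDegree) (hgl : ((G m).natDegree : ℕ∞) ≤ l) :
    (extendDerivation di G (m + 1) (by omega)).IsPolyRigid (X (Fin.last m)) ⊤ ∧
      (extendDerivation di G (m + 1) (by omega)).IsSimple := by
  have hext := isDerivationExtension_conj_extendDerivation di G hi him
  have hrigid' := hext.isPolyRigid hrigid hg hgl
  refine ⟨.of_conj (by rwa [finSuccLastAlgEquiv_X_last]), .of_conj (hext.isSimple hsimple ?_)⟩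
  intro f hf
  obtain ⟨⟨c, rfl⟩, -⟩ := hrigid' f 0 (by simp) (by simpa using hf)
  exact ⟨algebraMap k _ c, rfl⟩

theorem extendDerivation_isPolyRigid_isSimple (hi : 0 < i) {n : ℕ} {l : ℕ∞}
    (hrigid : di.IsPolyRigid (X ⟨i - 1, by omega⟩) l) (hsimple : di.IsSimple)
    (hg : ∀ j, i ≤ j → j < n → 0 < (G j).natDegree) (hgl : ((G i).natDegree : ℕ∞) ≤ l)
    (m : ℕ) (him : i + 1 ≤ m) (hmn : m ≤ n) :
    (extendDerivation di G m (by omega)).IsPolyRigid (X ⟨m - 1, by omega⟩) ⊤ ∧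
      (extendDerivation di G m (by omega)).IsSimple := by
  induction m, him using Nat.le_induction with
  | base =>
    rw [← extendDerivation_self di G le_rfl] at hrigid hsimple
    exact extendDerivation_succ di G hi le_rfl hrigid hsimple (hg i le_rfl (by omega)) hgl
  | succ m him ih =>
    obtain ⟨hrigid_m, hsimple_m⟩ := ih (by omega)
    exact extendDerivation_succ di G hi (by omega) hrigid_m hsimple_m (hg m (by omega) (by omega))
      le_top

end Simple

end MvPolynomial

open MvPolynomial

/-- With `d_i` a simple derivation of `k[x₁,…,x_i]` satisfying condition (i),
the extension `d_n = d_i + g_i(x_i)∂_{x_{i+1}} + … + g_{n-1}(x_{n-1})∂_{x_n}` (each `g_j`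
nonconstant, `deg g_i ≤ l`) is a simple derivation of `k[x₁,…,x_n]`.
(Variables are 0-indexed: `X j` is `x_{j+1}`; `G j` is the polynomial `g_j` of the paper,
1-indexed, so `d_n(X j) = G j (X (j-1))` for `i ≤ j < n`.) -/
theorem stmt8 (k : Type*) [Field k] [CharZero k] (i n : ℕ) (hi : 2 ≤ i) (hin : i < n)
    (l : ℕ∞)
    (di : Derivation k (MvPolynomial (Fin i) k) (MvPolynomial (Fin i) k))
    (hdi : ∀ (r : MvPolynomial (Fin i) k) (g : Polynomial k),
      (g.natDegree : ℕ∞) ≤ l →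
      di r = Polynomial.aeval (X (⟨i - 1, by omega⟩ : Fin i)) g →
      (∃ c : k, r = C c) ∧ g = 0)
    (hsimple : ∀ I : Ideal (MvPolynomial (Fin i) k), (∀ f ∈ I, di f ∈ I) → I = ⊥ ∨ I = ⊤)
    (G : ℕ → Polynomial k)
    (hGnc : ∀ j : ℕ, i ≤ j → j < n → 0 < (G j).natDegree)
    (hGdeg : ((G i).natDegree : ℕ∞) ≤ l)
    (dn : Derivation k (MvPolynomial (Fin n) k) (MvPolynomial (Fin n) k))
    (hres : ∀ j : Fin i,
      dn (X (Fin.castLE hin.le j)) = rename (Fin.castLE hin.le) (di (X j)))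
    (hG : ∀ (j : ℕ) (h1 : i ≤ j) (h2 : j < n),
      dn (X (⟨j, h2⟩ : Fin n)) = Polynomial.aeval (X (⟨j - 1, by omega⟩ : Fin n)) (G j)) :
    ∀ I : Ideal (MvPolynomial (Fin n) k), (∀ f ∈ I, dn f ∈ I) → I = ⊥ ∨ I = ⊤ := by
  have hdn : dn = extendDerivation di G n hin.le := by
    refine derivation_ext fun j ↦ ?_
    rw [extendDerivation_X]
    split_ifs with hj
    · exact hres ⟨j, hj⟩
    · exact hG j (by omega) j.isLt
  rw [hdn]
  exact (extendDerivation_isPolyRigid_isSimple di G (by omega) hdi hsimple hGnc hGdeg n hin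
    le_rfl).2
end

section
/- Let k be a field of characteristic zero and let d be the derivation of k[x,y] with d(x) = y^{m1}, d(y) = 1 + y^{m2} x, where m1 < m2 are positive integers. Then there is no polynomial f = Σ_{i=0}^{t} f_i(y) x^i ∈ k[x,y] with t ≥ 1 and f_t ≠ 0 such that d(f) ∈ k[x]. -/
open MvPolynomial

lemma coeff_pderiv' {σ : Type*} [DecidableEq σ] {R : Type*} [CommSemiring R]
    (i : σ) (m : σ →₀ ℕ) (p : MvPolynomial σ R) :
    coeff m (pderiv i p) = coeff (m + Finsupp.single i 1) p * (m i + 1 : ℕ) := by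
  induction p using MvPolynomial.induction_on' with
  | add p q hp hq => simp [hp, hq, add_mul]
  | monomial s a =>
    rw [pderiv_monomial, coeff_monomial, coeff_monomial]
    by_cases h : s = m + Finsupp.single i 1
    · subst h
      simp [Finsupp.add_apply, Finsupp.single_apply]
    · rw [if_neg h]
      by_cases h2 : s - Finsupp.single i 1 = m
      · rw [if_pos h2]
        have hsi : s i = 0 := by
          by_contra hsi
          apply h
          rw [← h2]
          ext j
          rw [Finsupp.add_apply, Finsupp.tsub_apply]
          rcases eq_or_ne j i with rfl | hj
          · rw [Finsupp.single_eq_same]; omega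
          · rw [Finsupp.single_eq_of_ne' (Ne.symm hj)]; omega
        simp [hsi]
      · rw [if_neg h2, zero_mul]

/-- For `d(x) = y^{m1}`, `d(y) = 1 + y^{m2} x` with `m1 < m2`, no polynomial
`f ∈ k[x,y]` of `x`-degree `≥ 1` satisfies `d f ∈ k[x]`. -/
theorem stmt12 (k : Type*) [Field k] [CharZero k]
    (m1 m2 : ℕ) (hm1 : 0 < m1) (hlt : m1 < m2)
    (d : Derivation k (MvPolynomial (Fin 2) k) (MvPolynomial (Fin 2) k))
    (hdx : d (X 0) = X 1 ^ m1)
    (hdy : d (X 1) = 1 + X 1 ^ m2 * X 0)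
    (f : MvPolynomial (Fin 2) k) (hdeg : 1 ≤ f.degreeOf 0)
    (g : Polynomial k)
    (hf : d f = Polynomial.aeval (X 0 : MvPolynomial (Fin 2) k) g) :
    False := by
  classical
  -- explicit formula for d
  have hd : d f = pderiv 0 f * X 1 ^ m1 + pderiv 1 f * (1 + X 1 ^ m2 * X 0) := by
    have hD : d = (X 1 ^ m1 : MvPolynomial (Fin 2) k) • pderiv 0
        + ((1 : MvPolynomial (Fin 2) k) + X 1 ^ m2 * X 0) • pderiv 1 := by
      apply MvPolynomial.derivation_ext
      intro i
      fin_cases i <;>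
        simp [hdx, hdy, pderiv_X_self, pderiv_X_of_ne, Fin.ext_iff]
    rw [hD]
    simp [smul_eq_mul, mul_comm]
  -- coefficients of f
  set c : ℕ → ℕ → k := fun a b => coeff (Finsupp.single 0 a + Finsupp.single 1 b) f with hc
  -- monomial bookkeeping
  have happ0 : ∀ a b : ℕ, ((Finsupp.single (0:Fin 2) a + Finsupp.single 1 b : Fin 2 →₀ ℕ)) 0 = a := by
    intro a b; simp [Finsupp.single_apply]
  have happ1 : ∀ a b : ℕ, ((Finsupp.single (0:Fin 2) a + Finsupp.single 1 b : Fin 2 →₀ ℕ)) 1 = b := by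
    intro a b; simp [Finsupp.single_apply]
  -- rhs has zero coefficients off the x-axis
  have hrhs : ∀ m : Fin 2 →₀ ℕ, m 1 ≠ 0 →
      coeff m (Polynomial.aeval (X 0 : MvPolynomial (Fin 2) k) g) = 0 := by
    intro m hm
    rw [Polynomial.aeval_def, Polynomial.eval₂_eq_sum, Polynomial.sum_def, coeff_sum]
    apply Finset.sum_eq_zero
    intro n _
    rw [MvPolynomial.algebraMap_eq, coeff_C_mul, coeff_X_pow, if_neg, mul_zero]
    intro h
    apply hm
    rw [← h, Finsupp.single_eq_of_ne']
    exact (by decide : (0 : Fin 2) ≠ 1)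
  -- the master equation
  have hE : ∀ a b : ℕ, 1 ≤ b →
      (if m1 ≤ b then c (a+1) (b-m1) * ((a+1 : ℕ) : k) else 0)
      + c a (b+1) * ((b+1 : ℕ) : k)
      + (if m2 ≤ b ∧ 1 ≤ a then c (a-1) (b-m2+1) * ((b-m2+1 : ℕ) : k) else 0) = 0 := by
    intro a b hb
    set m : Fin 2 →₀ ℕ := Finsupp.single 0 a + Finsupp.single 1 b with hm
    have h0 : coeff m (d f) = 0 := by
      rw [hf]; exact hrhs m (by rw [hm, happ1]; omega)
    rw [hd, mul_add, mul_one, coeff_add, coeff_add] at h0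
    -- term 1
    have ht1 : coeff m (pderiv 0 f * X 1 ^ m1)
        = (if m1 ≤ b then c (a+1) (b-m1) * ((a+1 : ℕ) : k) else 0) := by
      rw [X_pow_eq_monomial, coeff_mul_monomial']
      by_cases h : m1 ≤ b
      · rw [if_pos, if_pos h, mul_one]
        · have e1 : m - Finsupp.single 1 m1 = Finsupp.single (0:Fin 2) a + Finsupp.single 1 (b - m1) := by
            ext j; fin_cases j <;> simp [hm, Finsupp.tsub_apply, Finsupp.single_apply]
          rw [e1, coeff_pderiv']
          have e2 : (Finsupp.single (0:Fin 2) a + Finsupp.single 1 (b - m1)) + Finsupp.single 0 1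
              = Finsupp.single (0:Fin 2) (a+1) + Finsupp.single 1 (b - m1) := by
            ext j; fin_cases j <;> simp [Finsupp.single_apply]
          rw [e2, happ0]
        · rw [Finsupp.single_le_iff, hm, happ1]; exact h
      · rw [if_neg, if_neg h]
        rw [Finsupp.single_le_iff, hm, happ1]; exact h
    -- term 2
    have ht2 : coeff m (pderiv 1 f) = c a (b+1) * ((b+1 : ℕ) : k) := by
      rw [coeff_pderiv']
      have e2 : m + Finsupp.single 1 1 = Finsupp.single (0:Fin 2) a + Finsupp.single 1 (b+1) := by
        ext j; fin_cases j <;> simp [hm, Finsupp.single_apply]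
      rw [e2, hm, happ1]
    -- term 3
    have ht3 : coeff m (pderiv 1 f * (X 1 ^ m2 * X 0))
        = (if m2 ≤ b ∧ 1 ≤ a then c (a-1) (b-m2+1) * ((b-m2+1 : ℕ) : k) else 0) := by
      have hxx : (X 1 ^ m2 * X 0 : MvPolynomial (Fin 2) k)
          = monomial (Finsupp.single 1 m2 + Finsupp.single 0 1) 1 := by
        rw [X_pow_eq_monomial, X, monomial_mul, mul_one]
      rw [hxx, coeff_mul_monomial']
      by_cases h : m2 ≤ b ∧ 1 ≤ a
      · rw [if_pos, if_pos h, mul_one]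
        · have e1 : m - (Finsupp.single 1 m2 + Finsupp.single 0 1)
              = Finsupp.single (0:Fin 2) (a-1) + Finsupp.single 1 (b - m2) := by
            ext j; fin_cases j <;>
              simp [hm, Finsupp.tsub_apply, Finsupp.single_apply]
          rw [e1, coeff_pderiv']
          have e2 : (Finsupp.single (0:Fin 2) (a-1) + Finsupp.single 1 (b - m2)) + Finsupp.single 1 1
              = Finsupp.single (0:Fin 2) (a-1) + Finsupp.single 1 (b - m2 + 1) := by
            ext j; fin_cases j <;> simp [Finsupp.single_apply]
          rw [e2, happ1]
        · intro j
          fin_cases j <;> simp [hm, Finsupp.single_apply] <;> omega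
      · rw [if_neg, if_neg h]
        intro hle
        apply h
        constructor
        · have := hle 1; rw [hm] at this
          simpa [Finsupp.single_apply] using this
        · have := hle 0; rw [hm] at this
          simpa [Finsupp.single_apply] using this
    rw [ht1, ht2, ht3] at h0
    linear_combination h0
  -- vanishing above the x-degree
  set t := f.degreeOf 0 with htdef
  have hvan : ∀ a b : ℕ, t < a → c a b = 0 := by
    intro a b h
    by_contra hne
    have hle : ((Finsupp.single (0:Fin 2) a + Finsupp.single 1 b : Fin 2 →₀ ℕ)) 0 ≤ t := by
      rw [htdef, degreeOf_eq_sup]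
      exact Finset.le_sup (f := fun m => m 0) (mem_support_iff.2 hne)
    rw [happ0] at hle
    omega
  have hm2pos : 0 < m2 := lt_trans hm1 hlt
  -- step 1 : c t b = 0 for b ≥ 1
  have step1 : ∀ b : ℕ, 1 ≤ b → c t b = 0 := by
    intro b hb
    have h := hE (t+1) (b - 1 + m2) (by omega)
    rw [if_pos (by omega), hvan _ _ (by omega), hvan _ _ (by omega),
      if_pos ⟨by omega, by omega⟩] at h
    have e : b - 1 + m2 - m2 + 1 = b := by omega
    have e2 : t + 1 - 1 = t := by omega
    rw [e, e2] at h
    have hb0 : ((b : ℕ) : k) ≠ 0 := Nat.cast_ne_zero.2 (by omega)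
    have := mul_eq_zero.1 (by linear_combination h : c t b * ((b : ℕ) : k) = 0)
    tauto
  -- step 2 : c (t-1) b = 0 for b ≥ 1
  have step2 : ∀ b : ℕ, 1 ≤ b → c (t-1) b = 0 := by
    intro b hb
    have h := hE t (b - 1 + m2) (by omega)
    rw [if_pos (by omega), hvan _ _ (by omega), step1 _ (by omega),
      if_pos ⟨by omega, by omega⟩] at h
    have e : b - 1 + m2 - m2 + 1 = b := by omega
    rw [e] at h
    have hb0 : ((b : ℕ) : k) ≠ 0 := Nat.cast_ne_zero.2 (by omega)
    have := mul_eq_zero.1 (by linear_combination h : c (t-1) b * ((b : ℕ) : k) = 0)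
    tauto
  -- step 3 : c t 0 = 0
  have step3 : c t 0 = 0 := by
    have h := hE (t-1) m1 hm1
    rw [if_pos (le_refl m1), step2 _ (by omega), if_neg (by omega)] at h
    have e : t - 1 + 1 = t := by omega
    have e2 : m1 - m1 = 0 := by omega
    rw [e, e2] at h
    have ht0 : ((t : ℕ) : k) ≠ 0 := Nat.cast_ne_zero.2 (by omega)
    have h' : c t 0 * ((t : ℕ) : k) = 0 := by
      have e3 : ((t - 1 + 1 : ℕ) : k) = ((t : ℕ) : k) := by rw [e]
      linear_combination h
    have := mul_eq_zero.1 h'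
    tauto
  -- conclude
  have hlt' : f.degreeOf 0 < t := by
    rw [degreeOf_lt_iff (by omega : 0 < t)]
    intro m hmem
    have hle : m 0 ≤ t := by
      rw [htdef, degreeOf_eq_sup]
      exact Finset.le_sup (f := fun m => m 0) hmem
    rcases lt_or_eq_of_le hle with h | h
    · exact h
    · exfalso
      have hrep : m = Finsupp.single 0 (m 0) + Finsupp.single 1 (m 1) := by
        ext j; fin_cases j <;> simp [Finsupp.single_apply]
      have hcoeff : coeff m f = c (m 0) (m 1) := by conv_lhs => rw [hrep]
      have : coeff m f = 0 := by
        rw [hcoeff, h]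
        rcases Nat.eq_zero_or_pos (m 1) with h1 | h1
        · rw [h1]; exact step3
        · exact step1 _ h1
      exact (mem_support_iff.1 hmem) this
  omega
end

section
/- Let k be a field of characteristic zero and let d be the derivation of k[x,y] with d(x) = y^{m1}, d(y) = 1 + y^{m2} x, where m2 ∤ m1. Then d(k[x,y]) contains no nonzero element of k; in particular, d is non-invertible (its image contains no units of k[x,y]). -/
/-!
We build a `k`-linear functional `ε` on `k[x,y]` with `ε ∘ d = 0` and `ε 1 = 1`.
Index the monomial `x^i y^(n + i*m2)` by its row `i` and column `n`: `d` maps it to multiples of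
the monomials at `(i - 1, n + m1 + m2)`, `(i, n - 1)` and `(i + 1, n - 1)`, so `ε ∘ d = 0`
is a recursion computing row `i + 1` of `ε` from rows `i` and `i - 1`, except where
`n + i*m2 + 1 = 0`. There it degenerates into the constraint that `ε` vanish at
`(t, m1 - t*m2)`, coming from `d(x^(t+1)) = (t+1) x^t y^m1`. Row `0` is free. Changing its entry
in column `c` by `δ` changes row `t` of column `c` by `±δ` and touches only columns left of `c`,
so the constraints can be met one at a time, for `t = 0, 1, …`. Since `m2 ∤ m1`, none of
these columns is column `0`, where the entry `1` normalises `ε 1`.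
-/

open MvPolynomial Function

namespace NonInvertibleDerivation

section Weight

variable {k : Type*} [Field k] (m1 m2 : ℕ)

/-- `weight s i n` is the value of `ε` on `x^i y^(n + i*m2)` when row `0` is `s`. At a row where
`n + i*m2 + 1 = 0` the recursion leaves the next value unconstrained, and `x / 0 = 0` picks one. -/
noncomputable def weight (s : ℤ → k) : ℕ → ℤ → k
  | 0 => s
  | i + 1 => fun n => -weight s i n
      - i / ((n + i * m2 + 1 : ℤ) : k) * weight s (i - 1) (n + m1 + m2 + 1)

variable {m1 m2}

theorem weight_zero (s : ℤ → k) : weight m1 m2 s 0 = s := by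
  rw [weight]

theorem weight_succ (s : ℤ → k) (i : ℕ) (n : ℤ) :
    weight m1 m2 s (i + 1) n = -weight m1 m2 s i n
      - i / ((n + i * m2 + 1 : ℤ) : k) * weight m1 m2 s (i - 1) (n + m1 + m2 + 1) := by
  rw [weight]

theorem weight_congr {s s' : ℤ → k} (i : ℕ) (n : ℤ)
    (h : ∀ b : ℕ, s (n + b * (m1 + m2 + 1)) = s' (n + b * (m1 + m2 + 1))) :
    weight m1 m2 s i n = weight m1 m2 s' i n := by
  induction i using Nat.strong_induction_on generalizing n with
  | _ i ih =>
    cases i with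
    | zero => simpa [weight_zero] using h 0
    | succ i =>
      have h_shift : ∀ b : ℕ, s (n + m1 + m2 + 1 + b * (m1 + m2 + 1))
          = s' (n + m1 + m2 + 1 + b * (m1 + m2 + 1)) := fun b => by
        convert h (b + 1) using 2 <;> push_cast <;> ring
      rw [weight_succ, weight_succ, ih i (by omega) n h, ih (i - 1) (by omega) _ h_shift]

theorem weight_update_self (s : ℤ → k) (c : ℤ) (θ : k) (i : ℕ) :
    weight m1 m2 (update s c θ) i c = weight m1 m2 s i c + (-1) ^ i * (θ - s c) := by
  induction i with
  | zero => simp [weight_zero]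
  | succ i ih =>
    have h_shift : weight m1 m2 (update s c θ) (i - 1) (c + m1 + m2 + 1)
        = weight m1 m2 s (i - 1) (c + m1 + m2 + 1) :=
      weight_congr _ _ fun b => update_of_ne (by
        have : (0 : ℤ) ≤ b * (m1 + m2 + 1) := by positivity
        omega) _ _
    rw [weight_succ, weight_succ, ih, h_shift]
    ring

theorem weight_relation [CharZero k] (s : ℤ → k) (i : ℕ) (n : ℤ)
    (h : n + i * m2 + 1 ≠ 0) :
    ((n + i * m2 + 1 : ℤ) : k) * (weight m1 m2 s (i + 1) n + weight m1 m2 s i n)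
      + i * weight m1 m2 s (i - 1) (n + m1 + m2 + 1) = 0 := by
  have h' : ((n + i * m2 + 1 : ℤ) : k) ≠ 0 := by exact_mod_cast h
  rw [weight_succ]
  field_simp
  ring

end Weight

section Solution

variable {k : Type*} [Field k] (m1 m2 : ℕ)

def constraintCol (t : ℕ) : ℤ := m1 - t * m2

open scoped Classical in
noncomputable def seed (κ : ℕ → k) (n : ℤ) : k :=
  if n = 0 then 1 else if h : ∃ t, constraintCol m1 m2 t = n then κ h.choose else 0

/-- The seed at `constraintCol t`; by `weight_update_self` it cancels the constraint at `t` once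
the seeds of the earlier constraints are fixed. -/
noncomputable def correction : ℕ → k
  | t => -(-1) ^ t * weight m1 m2 (seed m1 m2 fun t' => if t' < t then correction t' else 0) t
      (constraintCol m1 m2 t)

noncomputable def solution : ℕ → ℤ → k := weight m1 m2 (seed m1 m2 (correction m1 m2))

variable {m1 m2}

theorem constraintCol_strictAnti (hm2 : 0 < m2) : StrictAnti (constraintCol m1 m2) :=
  fun t t' h => by
    have : (t : ℤ) * m2 < t' * m2 := by gcongr
    simp only [constraintCol]
    omega

theorem constraintCol_ne_zero (hdvd : ¬ m2 ∣ m1) (t : ℕ) : constraintCol m1 m2 t ≠ 0 :=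
  fun h => hdvd ⟨t, by
    unfold constraintCol at h; rw [mul_comm]; exact_mod_cast sub_eq_zero.mp h⟩

theorem seed_congr {κ κ' : ℕ → k} {n : ℤ}
    (h : ∀ t, constraintCol m1 m2 t = n → κ t = κ' t) :
    seed m1 m2 κ n = seed m1 m2 κ' n := by
  unfold seed
  split_ifs with _ hn
  · rfl
  · exact h _ hn.choose_spec
  · rfl

theorem seed_constraintCol (hm2 : 0 < m2) (hdvd : ¬ m2 ∣ m1) (κ : ℕ → k) (t : ℕ) :
    seed m1 m2 κ (constraintCol m1 m2 t) = κ t := by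
  have h : ∃ t', constraintCol m1 m2 t' = constraintCol m1 m2 t := ⟨t, rfl⟩
  rw [seed, if_neg (constraintCol_ne_zero hdvd t), dif_pos h,
    (constraintCol_strictAnti hm2).injective h.choose_spec]

theorem solution_constraintCol (hm2 : 0 < m2) (hdvd : ¬ m2 ∣ m1) (t : ℕ) :
    solution m1 m2 t (constraintCol m1 m2 t) = (0 : k) := by
  set c := constraintCol m1 m2 t
  set κ : ℕ → k := fun t' => if t' < t then correction m1 m2 t' else 0
  have h_ray : ∀ b : ℕ, seed m1 m2 (correction m1 m2) (c + b * (m1 + m2 + 1))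
      = update (seed m1 m2 κ) c (correction m1 m2 t) (c + b * (m1 + m2 + 1)) := by
    intro b
    rcases b.eq_zero_or_pos with rfl | hb
    · simp [c, seed_constraintCol hm2 hdvd]
    · have hlt : c < c + b * (m1 + m2 + 1) := by
        have : (0 : ℤ) < b * (m1 + m2 + 1) := by positivity
        omega
      rw [update_of_ne hlt.ne']
      refine seed_congr fun t' ht' => ?_
      have : t' < t := (constraintCol_strictAnti hm2).lt_iff_gt.mp (ht' ▸ hlt)
      simp [κ, this]
  rw [solution, weight_congr _ _ h_ray, weight_update_self, seed_constraintCol hm2 hdvd, correction]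
  simp only [κ, lt_irrefl, if_false, sub_zero]
  have h_sq : ((-1 : k) ^ t) * (-1) ^ t = 1 := by rw [← mul_pow, neg_one_mul, neg_neg, one_pow]
  linear_combination -weight m1 m2 (seed m1 m2 κ) t c * h_sq

theorem solution_relation [CharZero k] (hm2 : 0 < m2) (hdvd : ¬ m2 ∣ m1) (i : ℕ) (n : ℤ) :
    ((n + i * m2 + 1 : ℤ) : k) * (solution m1 m2 (i + 1) n + solution m1 m2 i n)
      + i * solution m1 m2 (i - 1) (n + m1 + m2 + 1) = 0 := by
  by_cases h : n + i * m2 + 1 = 0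
  · rw [h, Int.cast_zero, zero_mul, zero_add]
    cases i with
    | zero => rw [Nat.cast_zero, zero_mul]
    | succ j =>
      have h_col : n + m1 + m2 + 1 = constraintCol m1 m2 j := by
        simp only [constraintCol]; push_cast at h; linarith
      rw [Nat.add_sub_cancel, h_col, solution_constraintCol hm2 hdvd, mul_zero]
  · exact weight_relation _ i n h

end Solution

section Functional

variable {k : Type*} [Field k] (m1 m2 : ℕ)

noncomputable def functional : MvPolynomial (Fin 2) k →ₗ[k] k :=
  (basisMonomials (Fin 2) k).constr k fun v => solution m1 m2 (v 0) (v 1 - v 0 * m2)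

variable {m1 m2}

theorem X_pow_mul_X_pow_eq_basisMonomials (a b : ℕ) :
    (X 0 ^ a * X 1 ^ b : MvPolynomial (Fin 2) k)
      = basisMonomials (Fin 2) k (Finsupp.single 0 a + Finsupp.single 1 b) := by
  rw [coe_basisMonomials, X_pow_eq_monomial, X_pow_eq_monomial, monomial_mul, one_mul]

theorem functional_X_pow_mul_X_pow (a b : ℕ) :
    functional m1 m2 (X 0 ^ a * X 1 ^ b : MvPolynomial (Fin 2) k)
      = solution m1 m2 a (b - a * m2) := by
  rw [X_pow_mul_X_pow_eq_basisMonomials, functional, Module.Basis.constr_basis]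
  simp

theorem functional_C (c : k) : functional m1 m2 (C c : MvPolynomial (Fin 2) k) = c := by
  have h := functional_X_pow_mul_X_pow (k := k) (m1 := m1) (m2 := m2) 0 0
  rw [pow_zero, pow_zero, mul_one] at h
  rw [C_eq_smul_one, map_smul, h]
  simp [solution, weight_zero, seed]

end Functional

section Derivation

variable {k : Type*} [Field k] {m1 m2 : ℕ}
  (d : Derivation k (MvPolynomial (Fin 2) k) (MvPolynomial (Fin 2) k))
  (hdx : d (X 0) = X 1 ^ m1) (hdy : d (X 1) = 1 + X 1 ^ m2 * X 0)

include hdx hdy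

theorem derivation_X_pow_mul_X_pow (a b : ℕ) :
    d (X 0 ^ a * X 1 ^ b) = a • (X 0 ^ (a - 1) * X 1 ^ (b + m1))
      + b • (X 0 ^ a * X 1 ^ (b - 1)) + b • (X 0 ^ (a + 1) * X 1 ^ (b - 1 + m2)) := by
  rw [Derivation.leibniz, Derivation.leibniz_pow, Derivation.leibniz_pow, hdx, hdy]
  rcases a with _ | a <;> rcases b with _ | b <;>
    simp only [nsmul_eq_mul, smul_eq_mul, Nat.add_sub_cancel] <;> ring

theorem functional_derivation_X_pow_mul_X_pow [CharZero k] (hm2 : 0 < m2) (hdvd : ¬ m2 ∣ m1)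
    (a b : ℕ) : functional m1 m2 (d (X 0 ^ a * X 1 ^ b)) = 0 := by
  rw [derivation_X_pow_mul_X_pow d hdx hdy, map_add, map_add, map_nsmul, map_nsmul, map_nsmul,
    functional_X_pow_mul_X_pow, functional_X_pow_mul_X_pow, functional_X_pow_mul_X_pow]
  rcases b with _ | b
  · rcases a with _ | a
    · simp
    · have h := solution_constraintCol (k := k) hm2 hdvd a
      simp only [constraintCol] at h
      simp [h]
  · have h := solution_relation (k := k) hm2 hdvd a (b - a * m2)
    rcases a with _ | a <;>
    · push_cast at h ⊢
      linear_combination (norm := ring_nf) h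

theorem functional_derivation [CharZero k] (hm2 : 0 < m2) (hdvd : ¬ m2 ∣ m1)
    (p : MvPolynomial (Fin 2) k) : functional m1 m2 (d p) = 0 := by
  have h_comp : functional m1 m2 ∘ₗ d.toLinearMap = 0 := (basisMonomials _ _).ext fun v => by
    have hv : v = Finsupp.single 0 (v 0) + Finsupp.single 1 (v 1) := by
      ext i; fin_cases i <;> simp
    rw [hv, ← X_pow_mul_X_pow_eq_basisMonomials]
    exact functional_derivation_X_pow_mul_X_pow d hdx hdy hm2 hdvd _ _
  exact LinearMap.congr_fun h_comp p

end Derivation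

end NonInvertibleDerivation

open NonInvertibleDerivation in
theorem stmt17_general (k : Type*) [Field k] [CharZero k]
    (m1 m2 : ℕ) (hm2 : 0 < m2) (hdvd : ¬ m2 ∣ m1)
    (d : Derivation k (MvPolynomial (Fin 2) k) (MvPolynomial (Fin 2) k))
    (hdx : d (X 0) = X 1 ^ m1)
    (hdy : d (X 1) = 1 + X 1 ^ m2 * X 0) :
    (∀ (f : MvPolynomial (Fin 2) k) (c : k), d f = C c → c = 0) ∧
      ∀ f : MvPolynomial (Fin 2) k, ¬ IsUnit (d f) := by
  have h_const : ∀ (f : MvPolynomial (Fin 2) k) (c : k), d f = C c → c = 0 := fun f c h => by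
    simpa [h, functional_C] using functional_derivation d hdx hdy hm2 hdvd f
  refine ⟨h_const, fun f hf => ?_⟩
  obtain ⟨c, hc, hfc⟩ := isUnit_iff_eq_C_of_isReduced.mp hf
  exact hc.ne_zero (h_const f c hfc)

/-- For `d(x) = y^{m1}`, `d(y) = 1 + y^{m2} x` with `m2 ∤ m1`, the image of
`d` contains no nonzero element of `k`; in particular it contains no unit of `k[x,y]`,
i.e. `d` is non-invertible. -/
theorem stmt17 (k : Type*) [Field k] [CharZero k]
    (m1 m2 : ℕ) (hm1 : 0 < m1) (hm2 : 0 < m2) (hdvd : ¬ m2 ∣ m1)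
    (d : Derivation k (MvPolynomial (Fin 2) k) (MvPolynomial (Fin 2) k))
    (hdx : d (X 0) = X 1 ^ m1)
    (hdy : d (X 1) = 1 + X 1 ^ m2 * X 0) :
    (∀ (f : MvPolynomial (Fin 2) k) (c : k), d f = C c → c = 0) ∧
      ∀ f : MvPolynomial (Fin 2) k, ¬ IsUnit (d f) :=
  stmt17_general k m1 m2 hm2 hdvd d hdx hdy
end
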